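/- arXiv:1807.11602 — 3 statements merged into one kernel-verified Lean document; each statement's English description precedes it below -/
import Mathlib

section
/- Every quadrangular dissection of a convex 2n-gon with n >= 2 has at least one cell whose boundary contains three consecutive edges of the polygon. -/
/-!
Take a chord `(a, b)` of the dissection whose counterclockwise arc `a, a+1, …, b` is as
short as possible (or the whole polygon if there are no diagonals). No other diagonal has
both endpoints on that arc, since it would span a shorter arc, so the arc is a cell. All
cells are quadrilaterals, so the arc has exactly four vertices, i.e. three consecutive
polygon edges.
-/

/-- Arc length from `a` to `b` going counterclockwise around `Fin m`. -/
def arcd (m : ℕ) (a b : Fin m) : ℕ := (b.val + m - a.val) % m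

/-- `x` lies strictly between `a` and `b` going counterclockwise. -/
def btwn (m : ℕ) (a x b : Fin m) : Prop := 0 < arcd m a x ∧ arcd m a x < arcd m a b

/-- Two chords of the convex `m`-gon cross in their interiors. -/
def Crosses (m : ℕ) (d e : Fin m × Fin m) : Prop :=
  (btwn m d.1 e.1 d.2 ∧ btwn m d.2 e.2 d.1) ∨
  (btwn m d.1 e.2 d.2 ∧ btwn m d.2 e.1 d.1)

/-- `d` is a diagonal of the convex `m`-gon: its endpoints are distinct and non-adjacent. -/
def IsPolyDiagonal (m : ℕ) (d : Fin m × Fin m) : Prop :=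
  arcd m d.1 d.2 ≠ 0 ∧ arcd m d.1 d.2 ≠ 1 ∧ arcd m d.2 d.1 ≠ 1

/-- `y` is the cyclic successor of `x` within the vertex set `C`. -/
def SuccIn (m : ℕ) (C : Finset (Fin m)) (x y : Fin m) : Prop :=
  x ∈ C ∧ y ∈ C ∧ y ≠ x ∧ ∀ z ∈ C, z ≠ x → arcd m x y ≤ arcd m x z

/-- `C` is (the vertex set of) a cell of the dissection of the convex `m`-gon by
the diagonals `D`: consecutive vertices of `C` are joined by polygon edges or
diagonals of `D`, and no diagonal of `D` subdivides `C`. -/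
def IsCell (m : ℕ) (D : Finset (Fin m × Fin m)) (C : Finset (Fin m)) : Prop :=
  3 ≤ C.card ∧
  (∀ x y : Fin m, SuccIn m C x y → arcd m x y = 1 ∨ (x, y) ∈ D ∨ (y, x) ∈ D) ∧
  ∀ d ∈ D, d.1 ∈ C → d.2 ∈ C → SuccIn m C d.1 d.2 ∨ SuccIn m C d.2 d.1

/-- A quadrangular dissection of a convex `2n`-gon: `n - 2` pairwise non-crossing
diagonals, all of whose cells are quadrilaterals. -/
structure QDiss (n : ℕ) where
  diags : Finset (Fin (2*n) × Fin (2*n))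
  ord : ∀ d ∈ diags, d.1 < d.2
  isDiag : ∀ d ∈ diags, IsPolyDiagonal (2*n) d
  noncross : ∀ d ∈ diags, ∀ e ∈ diags, ¬ Crosses (2*n) d e
  card_eq : diags.card = n - 2
  quad : ∀ C : Finset (Fin (2*n)), IsCell (2*n) diags C → C.card = 4

open Finset

section Arcd

variable {m : ℕ}

lemma arcd_eq_ite (a b : Fin m) :
    arcd m a b = if a.val ≤ b.val then b.val - a.val else b.val + m - a.val := by
  have := a.isLt
  unfold arcd
  split_ifs with h
  · rw [show b.val + m - a.val = b.val - a.val + m by omega, Nat.add_mod_right,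
      Nat.mod_eq_of_lt (by omega)]
  · exact Nat.mod_eq_of_lt (by omega)

lemma arcd_lt (a b : Fin m) : arcd m a b < m := by
  have := a.isLt; have := b.isLt
  rw [arcd_eq_ite]; split_ifs <;> omega

lemma arcd_eq_zero_iff {a b : Fin m} : arcd m a b = 0 ↔ a = b := by
  have := a.isLt; have := b.isLt
  rw [arcd_eq_ite, Fin.ext_iff]; split_ifs <;> omega

@[simp]
lemma arcd_self (a : Fin m) : arcd m a a = 0 := arcd_eq_zero_iff.mpr rfl

lemma arcd_injective (a : Fin m) : Function.Injective (arcd m a) := by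
  intro x y h
  have := a.isLt; have := x.isLt; have := y.isLt
  rw [arcd_eq_ite, arcd_eq_ite] at h
  ext; split_ifs at h <;> omega

lemma arcd_add_arcd_of_ne {a b : Fin m} (h : a ≠ b) : arcd m a b + arcd m b a = m := by
  have := a.isLt; have := b.isLt
  rw [Ne, Fin.ext_iff] at h
  rw [arcd_eq_ite, arcd_eq_ite]; split_ifs <;> omega

lemma exists_arcd_eq (a : Fin m) {j : ℕ} (hj : j < m) : ∃ x : Fin m, arcd m a x = j := by
  have := a.isLt
  by_cases h : a.val + j < m
  · exact ⟨⟨a.val + j, h⟩, by rw [arcd_eq_ite]; split_ifs <;> simp_all⟩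
  · exact ⟨⟨a.val + j - m, by omega⟩, by rw [arcd_eq_ite]; split_ifs <;> simp_all <;> omega⟩

lemma arcd_eq_sub_of_le {a x z : Fin m} (h : arcd m a x ≤ arcd m a z) :
    arcd m x z = arcd m a z - arcd m a x := by
  have := a.isLt; have := x.isLt; have := z.isLt
  rw [arcd_eq_ite a x, arcd_eq_ite a z] at h
  rw [arcd_eq_ite, arcd_eq_ite a x, arcd_eq_ite a z]
  split_ifs at h ⊢ <;> omega

lemma arcd_eq_one_of_succ {a x z : Fin m} (h : arcd m a x + 1 = arcd m a z) :
    arcd m x z = 1 := by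
  rw [arcd_eq_sub_of_le (a := a) (by omega)]; omega

end Arcd

section SuccIn

variable {m : ℕ} {C : Finset (Fin m)} {x y : Fin m}

lemma SuccIn.unique {y' : Fin m} (hy : SuccIn m C x y) (hy' : SuccIn m C x y') : y = y' :=
  arcd_injective x (le_antisymm (hy.2.2.2 y' hy'.2.1 hy'.2.2.1) (hy'.2.2.2 y hy.2.1 hy.2.2.1))

lemma SuccIn.arcd_eq_one {x' : Fin m} (hs : SuccIn m C x y) (hx' : x' ∈ C)
    (h : arcd m x x' = 1) : arcd m x y = 1 := by
  obtain ⟨-, -, hyx, hmin⟩ := hs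
  have hx'x : x' ≠ x := by rintro rfl; simp at h
  have := hmin x' hx' hx'x
  have : arcd m x y ≠ 0 := fun h0 => hyx (arcd_eq_zero_iff.mp h0).symm
  omega

end SuccIn

def arc (m : ℕ) (a : Fin m) (k : ℕ) : Finset (Fin m) :=
  univ.filter fun x => arcd m a x ≤ k

section Arc

variable {m : ℕ} {a : Fin m} {k : ℕ}

@[simp]
lemma mem_arc {x : Fin m} : x ∈ arc m a k ↔ arcd m a x ≤ k := by
  simp [arc]

lemma card_arc (hk : k < m) : #(arc m a k) = k + 1 := by
  rw [← card_range (k + 1)]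
  refine card_bij (fun x _ => arcd m a x) (fun x hx => by simpa [Nat.lt_succ_iff] using hx)
    (fun x _ y _ h => arcd_injective a h) (fun j hj => ?_)
  obtain ⟨x, hx⟩ := exists_arcd_eq a (j := j) (by simp at hj; omega)
  exact ⟨x, by simp at hj ⊢; omega, hx⟩

lemma succIn_arc_last {b : Fin m} (hb : arcd m a b = k) (hk : 0 < k) :
    SuccIn m (arc m a k) b a := by
  have hab : a ≠ b := by rintro rfl; simp at hb; omega
  refine ⟨mem_arc.mpr hb.le, mem_arc.mpr (by simp), hab, fun z hz hzb => ?_⟩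
  have hz : arcd m a z < k :=
    lt_of_le_of_ne (mem_arc.mp hz) fun h => hzb (arcd_injective a (h.trans hb.symm))
  have hzb' : arcd m z b = k - arcd m a z := by rw [arcd_eq_sub_of_le (a := a) (by omega), hb]
  have := arcd_add_arcd_of_ne hab
  have := arcd_add_arcd_of_ne (Ne.symm hzb)
  omega

lemma SuccIn.arcd_eq_one_of_mem_arc {x y : Fin m} (hs : SuccIn m (arc m a k) x y)
    (hx : arcd m a x < k) (hk : k < m) : arcd m x y = 1 := by
  obtain ⟨x', hx'⟩ := exists_arcd_eq a (j := arcd m a x + 1) (by omega)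
  exact hs.arcd_eq_one (mem_arc.mpr (by omega)) (arcd_eq_one_of_succ hx'.symm)

lemma isCell_arc {D : Finset (Fin m × Fin m)} {b : Fin m} (hk : 2 ≤ k) (hkm : k < m)
    (hb : arcd m a b = k) (hclose : arcd m b a = 1 ∨ (b, a) ∈ D ∨ (a, b) ∈ D)
    (hD : ∀ d ∈ D, d.1 ∈ arc m a k → d.2 ∈ arc m a k → d = (a, b) ∨ d = (b, a)) :
    IsCell m D (arc m a k) := by
  have hlast := succIn_arc_last hb (by omega)
  refine ⟨by rw [card_arc hkm]; omega, fun x y hs => ?_, fun d hd h1 h2 => ?_⟩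
  · rcases (mem_arc.mp hs.1).lt_or_eq with hx | hx
    · exact Or.inl (hs.arcd_eq_one_of_mem_arc hx hkm)
    · obtain rfl : x = b := arcd_injective a (hx.trans hb.symm)
      obtain rfl := hlast.unique hs
      exact hclose
  · rcases hD d hd h1 h2 with rfl | rfl
    · exact Or.inr hlast
    · exact Or.inl hlast

lemma eq_of_mem_arc_of_arcd_le {b x y : Fin m} (hy : y ∈ arc m a (arcd m a b))
    (hxy : arcd m a x < arcd m a y) (hmin : arcd m a b ≤ arcd m x y) : x = a ∧ y = b := by
  rw [mem_arc] at hy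
  rw [arcd_eq_sub_of_le hxy.le] at hmin
  exact ⟨arcd_injective a (by simp; omega), arcd_injective a (by omega)⟩

end Arc

lemma exists_shortest_chord {m : ℕ} {D : Finset (Fin m × Fin m)} (hD : D.Nonempty) :
    ∃ a b, ((a, b) ∈ D ∨ (b, a) ∈ D) ∧
      ∀ d ∈ D, arcd m a b ≤ arcd m d.1 d.2 ∧ arcd m a b ≤ arcd m d.2 d.1 := by
  obtain ⟨d₀, hd₀, hmin⟩ := D.exists_min_image (fun d => min (arcd m d.1 d.2) (arcd m d.2 d.1)) hD
  rcases le_total (arcd m d₀.1 d₀.2) (arcd m d₀.2 d₀.1) with h | h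
  · exact ⟨d₀.1, d₀.2, Or.inl hd₀, fun d hd => by simpa [min_eq_left h] using hmin d hd⟩
  · exact ⟨d₀.2, d₀.1, Or.inr hd₀, fun d hd => by simpa [min_eq_right h] using hmin d hd⟩

lemma exists_isCell_arc {m : ℕ} (hm : 3 ≤ m) {D : Finset (Fin m × Fin m)}
    (hD : ∀ d ∈ D, IsPolyDiagonal m d) : ∃ a k, k < m ∧ IsCell m D (arc m a k) := by
  let a : Fin m := ⟨0, by omega⟩
  rcases D.eq_empty_or_nonempty with rfl | hne
  · obtain ⟨b, hb⟩ := exists_arcd_eq a (j := m - 1) (by omega)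
    have hab : a ≠ b := by rintro rfl; simp at hb; omega
    have hba : arcd m b a = 1 := by have := arcd_add_arcd_of_ne hab; omega
    exact ⟨a, m - 1, by omega, isCell_arc (by omega) (by omega) hb (Or.inl hba) (by simp)⟩
  obtain ⟨a, b, hab, hmin⟩ := exists_shortest_chord hne
  have ⟨hk0, hk1⟩ : arcd m a b ≠ 0 ∧ arcd m a b ≠ 1 := by
    rcases hab with h | h
    · exact ⟨(hD _ h).1, (hD _ h).2.1⟩
    · exact ⟨fun h0 => (hD _ h).1 (arcd_eq_zero_iff.mpr (arcd_eq_zero_iff.mp h0).symm),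
        (hD _ h).2.2⟩
  refine ⟨a, _, arcd_lt a b, isCell_arc (by omega) (arcd_lt a b) rfl (Or.inr hab.symm) ?_⟩
  intro d hd h1 h2
  have hends : arcd m a d.1 ≠ arcd m a d.2 := fun h =>
    (hD d hd).1 (arcd_eq_zero_iff.mpr (arcd_injective a h))
  rcases hends.lt_or_gt with hlt | hgt
  · obtain ⟨h1, h2⟩ := eq_of_mem_arc_of_arcd_le h2 hlt (hmin d hd).1
    exact Or.inl (Prod.ext h1 h2)
  · obtain ⟨h2, h1⟩ := eq_of_mem_arc_of_arcd_le h1 hgt (hmin d hd).2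
    exact Or.inr (Prod.ext h1 h2)

lemma exists_three_edges_in_arc {m : ℕ} (hm : 3 < m) (a : Fin m) :
    ∃ x y z w : Fin m, x ∈ arc m a 3 ∧ y ∈ arc m a 3 ∧ z ∈ arc m a 3 ∧ w ∈ arc m a 3 ∧
      arcd m x y = 1 ∧ arcd m y z = 1 ∧ arcd m z w = 1 := by
  obtain ⟨y, hy⟩ := exists_arcd_eq a (j := 1) (by omega)
  obtain ⟨z, hz⟩ := exists_arcd_eq a (j := 2) (by omega)
  obtain ⟨w, hw⟩ := exists_arcd_eq a (j := 3) (by omega)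
  refine ⟨a, y, z, w, ?_, ?_, ?_, ?_, hy, arcd_eq_one_of_succ (a := a) (by omega),
    arcd_eq_one_of_succ (a := a) (by omega)⟩ <;> simp [hy, hz, hw]

/-- Every quadrangular dissection of a convex `2n`-gon (`n ≥ 2`) has a cell whose
boundary contains three consecutive edges of the polygon. -/
theorem qdiss_exists_ear (n : ℕ) (hn : 2 ≤ n) (q : QDiss n) :
    ∃ C : Finset (Fin (2*n)), IsCell (2*n) q.diags C ∧
      ∃ x y z w : Fin (2*n), x ∈ C ∧ y ∈ C ∧ z ∈ C ∧ w ∈ C ∧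
        arcd (2*n) x y = 1 ∧ arcd (2*n) y z = 1 ∧ arcd (2*n) z w = 1 := by
  obtain ⟨a, k, hk, hcell⟩ := exists_isCell_arc (by omega) q.isDiag
  have hk3 : k = 3 := by
    have := q.quad _ hcell
    rw [card_arc hk] at this
    omega
  subst hk3
  exact ⟨_, hcell, exists_three_edges_in_arc hk a⟩
end

section
/- For even n, no quadrangular dissection of a convex 2n-gon invariant under rotation by π can have a dissecting diagonal that is a diameter; instead it has a cell invariant under this rotation containing the center. -/
/-- Rotation of `Fin m` by `k` steps. -/
def rotBy (m k : ℕ) (x : Fin m) : Fin m :=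
  ⟨(x.val + k) % m, Nat.mod_lt _ (Nat.lt_of_le_of_lt (Nat.zero_le _) x.isLt)⟩

/-- Reflection of `Fin m`: `x ↦ k - x (mod m)`. -/
def reflBy (m k : ℕ) (x : Fin m) : Fin m :=
  ⟨(k + (m - x.val)) % m, Nat.mod_lt _ (Nat.lt_of_le_of_lt (Nat.zero_le _) x.isLt)⟩

/-- The dissection `q` is invariant under rotation of the `2n`-gon by `k` vertex
steps. -/
def RotInvBy (n k : ℕ) (q : QDiss n) : Prop :=
  ∀ d ∈ q.diags,
    (rotBy (2*n) k d.1, rotBy (2*n) k d.2) ∈ q.diags ∨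
    (rotBy (2*n) k d.2, rotBy (2*n) k d.1) ∈ q.diags

namespace QD

lemma arcd_spec {m : ℕ} (a b : Fin m) :
    arcd m a b < m ∧ (a.val + arcd m a b = b.val ∨ a.val + arcd m a b = b.val + m) := by
  have ha := a.isLt; have hb := b.isLt
  unfold arcd
  rcases le_or_gt a.val b.val with h | h
  · have e : b.val + m - a.val = (b.val - a.val) + m := by omega
    rw [e, Nat.add_mod_right, Nat.mod_eq_of_lt (by omega)]
    omega
  · rw [Nat.mod_eq_of_lt (by omega)]
    omega

lemma arcd_self {m : ℕ} (a : Fin m) : arcd m a a = 0 := by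
  obtain ⟨h1, h2⟩ := arcd_spec a a; omega

lemma arcd_eq_zero_iff {m : ℕ} {a b : Fin m} : arcd m a b = 0 ↔ a = b := by
  obtain ⟨h1, h2⟩ := arcd_spec a b
  have ha := a.isLt; have hb := b.isLt
  constructor
  · intro h; exact Fin.ext (by omega)
  · intro h; subst h; omega

lemma arcd_inj {m : ℕ} {a x y : Fin m} (h : arcd m a x = arcd m a y) : x = y := by
  obtain ⟨h1, h2⟩ := arcd_spec a x
  obtain ⟨h3, h4⟩ := arcd_spec a y
  have := a.isLt; have := x.isLt; have := y.isLt
  exact Fin.ext (by omega)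

lemma arcd_inj_right {m : ℕ} {a x y : Fin m} (h : arcd m x a = arcd m y a) : x = y := by
  obtain ⟨h1, h2⟩ := arcd_spec x a
  obtain ⟨h3, h4⟩ := arcd_spec y a
  have := a.isLt; have := x.isLt; have := y.isLt
  exact Fin.ext (by omega)

lemma arcd_symm {m : ℕ} {a b : Fin m} (h : a ≠ b) : arcd m a b + arcd m b a = m := by
  obtain ⟨h1, h2⟩ := arcd_spec a b
  obtain ⟨h3, h4⟩ := arcd_spec b a
  have := a.isLt; have := b.isLt
  have hv : a.val ≠ b.val := fun hc => h (Fin.ext hc)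
  omega

lemma exists_arcd {m : ℕ} (a : Fin m) {c : ℕ} (hc : c < m) : ∃ x : Fin m, arcd m a x = c := by
  have ha := a.isLt
  refine ⟨⟨(a.val + c) % m, Nat.mod_lt _ (by omega)⟩, ?_⟩
  have hx : (a.val + c) % m = a.val + c ∨ (a.val + c) % m + m = a.val + c := by
    rcases Nat.lt_or_ge (a.val + c) m with h | h
    · left; exact Nat.mod_eq_of_lt h
    · right
      rw [Nat.mod_eq_sub_mod h, Nat.mod_eq_of_lt (by omega)]
      omega
  obtain ⟨h1, h2⟩ := arcd_spec a (⟨(a.val + c) % m, Nat.mod_lt _ (by omega)⟩ : Fin m)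
  simp only at h2
  omega

lemma btwn_iff {m : ℕ} (a : Fin m) {u x v : Fin m} :
    btwn m u x v ↔
      ((arcd m a u < arcd m a x ∧ arcd m a x < arcd m a v) ∨
       (arcd m a v < arcd m a u ∧ arcd m a u < arcd m a x) ∨
       (arcd m a x < arcd m a v ∧ arcd m a v < arcd m a u)) := by
  unfold btwn
  obtain ⟨h1, h2⟩ := arcd_spec u x
  obtain ⟨h3, h4⟩ := arcd_spec u v
  obtain ⟨h5, h6⟩ := arcd_spec a u
  obtain ⟨h7, h8⟩ := arcd_spec a x
  obtain ⟨h9, h10⟩ := arcd_spec a v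
  have := a.isLt; have := u.isLt; have := x.isLt; have := v.isLt
  omega

lemma arcd_coord {m : ℕ} (a : Fin m) (u v : Fin m) :
    arcd m u v = if arcd m a u ≤ arcd m a v then arcd m a v - arcd m a u
      else arcd m a v + m - arcd m a u := by
  obtain ⟨h1, h2⟩ := arcd_spec u v
  obtain ⟨h5, h6⟩ := arcd_spec a u
  obtain ⟨h9, h10⟩ := arcd_spec a v
  have := a.isLt; have := u.isLt; have := v.isLt
  split_ifs <;> omega

lemma rotn_val {n : ℕ} (x : Fin (2*n)) :
    (rotBy (2*n) n x).val = x.val + n ∨ (rotBy (2*n) n x).val + 2*n = x.val + n := by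
  have hx := x.isLt
  unfold rotBy
  simp only
  rcases Nat.lt_or_ge (x.val + n) (2*n) with h | h
  · left; exact Nat.mod_eq_of_lt h
  · right
    rw [Nat.mod_eq_sub_mod h, Nat.mod_eq_of_lt (by omega)]
    omega

lemma rot_invol {n : ℕ} (x : Fin (2*n)) : rotBy (2*n) n (rotBy (2*n) n x) = x := by
  have h1 := rotn_val x
  have h2 := rotn_val (rotBy (2*n) n x)
  have := x.isLt; have := (rotBy (2*n) n x).isLt
  exact Fin.ext (by omega)

lemma arcd_rot {n : ℕ} (u v : Fin (2*n)) :
    arcd (2*n) (rotBy (2*n) n u) (rotBy (2*n) n v) = arcd (2*n) u v := by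
  obtain ⟨h1, h2⟩ := arcd_spec (rotBy (2*n) n u) (rotBy (2*n) n v)
  obtain ⟨h3, h4⟩ := arcd_spec u v
  have h5 := rotn_val u; have h6 := rotn_val v
  have := u.isLt; have := v.isLt
  omega

lemma arcd_rot_self {n : ℕ} (hn : 0 < n) (x : Fin (2*n)) :
    arcd (2*n) x (rotBy (2*n) n x) = n := by
  obtain ⟨h1, h2⟩ := arcd_spec x (rotBy (2*n) n x)
  have h5 := rotn_val x
  have := x.isLt
  omega

lemma crosses_swap_left {m : ℕ} {d1 d2 : Fin m} {e : Fin m × Fin m} :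
    Crosses m (d1, d2) e ↔ Crosses m (d2, d1) e := by
  unfold Crosses btwn
  dsimp only
  obtain ⟨h1, h2⟩ := arcd_spec d1 e.1
  obtain ⟨h3, h4⟩ := arcd_spec d1 e.2
  obtain ⟨h5, h6⟩ := arcd_spec d2 e.1
  obtain ⟨h7, h8⟩ := arcd_spec d2 e.2
  obtain ⟨h9, h10⟩ := arcd_spec d1 d2
  obtain ⟨h11, h12⟩ := arcd_spec d2 d1
  have := d1.isLt; have := d2.isLt; have := e.1.isLt; have := e.2.isLt
  omega

lemma crosses_swap_right {m : ℕ} {d : Fin m × Fin m} {e1 e2 : Fin m} :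
    Crosses m d (e1, e2) ↔ Crosses m d (e2, e1) := by
  unfold Crosses
  dsimp only
  tauto

end QD
namespace QD

lemma arcd_coord2 {m : ℕ} (a u v : Fin m) :
    (arcd m a u ≤ arcd m a v ∧ arcd m u v = arcd m a v - arcd m a u) ∨
    (arcd m a v < arcd m a u ∧ arcd m u v = arcd m a v + m - arcd m a u) := by
  rw [arcd_coord a u v]
  split_ifs with h
  · exact Or.inl ⟨h, rfl⟩
  · exact Or.inr ⟨by omega, rfl⟩

/-- If `u` is strictly inside the coordinate interval of chord `(g1,g2)` and the
chord `(u,w)` does not cross it, then `w`'s coordinate is inside the closed interval. -/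
lemma lin_cross {m : ℕ} (a g1 g2 u w : Fin m)
    (h : ¬ Crosses m (g1, g2) (u, w))
    (h1 : min (arcd m a g1) (arcd m a g2) < arcd m a u)
    (h2 : arcd m a u < max (arcd m a g1) (arcd m a g2)) :
    min (arcd m a g1) (arcd m a g2) ≤ arcd m a w ∧
    arcd m a w ≤ max (arcd m a g1) (arcd m a g2) := by
  unfold Crosses at h
  dsimp only at h
  rw [btwn_iff a, btwn_iff a, btwn_iff a, btwn_iff a] at h
  have e1 := arcd_spec a g1
  have e2 := arcd_spec a g2
  have e3 := arcd_spec a u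
  have e4 := arcd_spec a w
  have := g1.isLt; have := g2.isLt; have := u.isLt; have := w.isLt; have := a.isLt
  omega

lemma arcd_lt {m : ℕ} (a b : Fin m) : arcd m a b < m :=
  (arcd_spec a b).1

set_option maxHeartbeats 1000000 in
lemma star {n : ℕ} {p q u v : Fin (2*n)}
    (huv : arcd (2*n) u v < n) (hpq : arcd (2*n) p q < n)
    (hu : btwn (2*n) p u q ∨ btwn (2*n) p v q)
    (hnc : ¬ Crosses (2*n) (p, q) (u, v)) :
    arcd (2*n) u v < arcd (2*n) p q ∧
    ∀ z : Fin (2*n), btwn (2*n) u z v → btwn (2*n) p z q := by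
  unfold Crosses at hnc
  dsimp only at hnc
  rw [btwn_iff p, btwn_iff p, btwn_iff p, btwn_iff p] at hnc
  simp only [btwn_iff p] at hu
  have hc := arcd_coord2 p u v
  have hq0 : arcd (2*n) p p = 0 := arcd_self p
  have e1 := arcd_lt p u
  have e2 := arcd_lt p v
  have e3 := arcd_lt p q
  constructor
  · omega
  · intro z hz
    rw [btwn_iff p] at hz ⊢
    have e5 := arcd_lt p z
    have hcz := arcd_coord2 p u z
    omega

end QD

namespace QD

/-- `x` is hidden from the chord `(a,b)` (inside the region on the `a→b` side)
by the diagonal `f`. Coordinates are arc distances from `a`; `t = arcd m a b`. -/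
def Excl (m t : ℕ) (a b u v : Fin m) (x : Fin m) : Prop :=
  ¬(u = a ∧ v = b) ∧ ¬(u = b ∧ v = a) ∧ arcd m a u ≤ t ∧ arcd m a v ≤ t ∧
  min (arcd m a u) (arcd m a v) < arcd m a x ∧
  arcd m a x < max (arcd m a u) (arcd m a v)

lemma card3 {α : Type*} [DecidableEq α] {C : Finset α} {x y z : α}
    (hx : x ∈ C) (hy : y ∈ C) (hz : z ∈ C)
    (h1 : x ≠ y) (h2 : x ≠ z) (h3 : y ≠ z) : 3 ≤ C.card := by
  have hsub : ({x, y, z} : Finset α) ⊆ C := by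
    intro w hw
    simp only [Finset.mem_insert, Finset.mem_singleton] at hw
    rcases hw with rfl | rfl | rfl <;> assumption
  have hcard : ({x, y, z} : Finset α).card = 3 := by
    rw [Finset.card_insert_of_notMem (by simp [h1, h2]),
      Finset.card_insert_of_notMem (by simp [h3]), Finset.card_singleton]
  exact hcard ▸ Finset.card_le_card hsub
  
end QD

namespace QD

lemma region_cell {n : ℕ} (q : QDiss n) {a b : Fin (2*n)}
    (hab : (a, b) ∈ q.diags ∨ (b, a) ∈ q.diags) :
    ∃ C : Finset (Fin (2*n)), IsCell (2*n) q.diags C ∧ a ∈ C ∧ b ∈ C ∧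
      ∀ x ∈ C, arcd (2*n) a x ≤ arcd (2*n) a b := by
  classical
  -- basic facts
  have hane : a ≠ b := by
    intro he
    rcases hab with h | h
    · exact (q.isDiag _ h).1 (show arcd (2*n) a b = 0 by rw [he]; exact arcd_self b)
    · exact (q.isDiag _ h).1 (show arcd (2*n) b a = 0 by rw [he]; exact arcd_self b)
  have hsymm := arcd_symm hane
  have ht2 : 2 ≤ arcd (2*n) a b := by
    have h0 : arcd (2*n) a b ≠ 0 := fun hc => hane (arcd_eq_zero_iff.mp hc)
    rcases hab with h | h
    · have h2 : arcd (2*n) a b ≠ 1 := (q.isDiag _ h).2.1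
      omega
    · have h2 : arcd (2*n) a b ≠ 1 := (q.isDiag _ h).2.2
      omega
  have htm : arcd (2*n) a b + 2 ≤ 2*n := by
    have h0 : arcd (2*n) b a ≠ 0 := fun hc => hane (arcd_eq_zero_iff.mp hc).symm
    rcases hab with h | h
    · have h2 : arcd (2*n) b a ≠ 1 := (q.isDiag _ h).2.2
      omega
    · have h2 : arcd (2*n) b a ≠ 1 := (q.isDiag _ h).2.1
      omega
  set t := arcd (2*n) a b with htdef
  set C := Finset.univ.filter
    (fun x => arcd (2*n) a x ≤ t ∧ ∀ f ∈ q.diags, ¬ Excl (2*n) t a b f.1 f.2 x) with hCdef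
  have memC : ∀ x : Fin (2*n), x ∈ C ↔
      (arcd (2*n) a x ≤ t ∧ ∀ f ∈ q.diags, ¬ Excl (2*n) t a b f.1 f.2 x) := by
    intro x; simp [hCdef]
  have hC_le : ∀ x ∈ C, arcd (2*n) a x ≤ t := fun x hx => ((memC x).mp hx).1
  have hC_vis : ∀ x ∈ C, ∀ f ∈ q.diags, ¬ Excl (2*n) t a b f.1 f.2 x :=
    fun x hx => ((memC x).mp hx).2
  have haa : arcd (2*n) a a = 0 := arcd_self a
  have haC : a ∈ C := by
    rw [memC]
    refine ⟨by omega, fun f hf he => ?_⟩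
    have := he.2.2.2.2.1
    omega
  have hbC : b ∈ C := by
    rw [memC]
    refine ⟨le_refl _, fun f hf he => ?_⟩
    have h1 := he.2.2.1
    have h2 := he.2.2.2.1
    have h3 := he.2.2.2.2.2
    omega
  -- key: the maximal diagonal hiding a point has both endpoints in C
  have key : ∀ z : Fin (2*n), arcd (2*n) a z ≤ t → z ∉ C →
      ∃ f1 f2 : Fin (2*n), (f1, f2) ∈ q.diags ∧ Excl (2*n) t a b f1 f2 z ∧
        f1 ∈ C ∧ f2 ∈ C := by
    intro z hz hzC
    have hex : ∃ f ∈ q.diags, Excl (2*n) t a b f.1 f.2 z := by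
      rw [memC] at hzC
      push_neg at hzC
      exact hzC hz
    set F := q.diags.filter (fun f => Excl (2*n) t a b f.1 f.2 z) with hFdef
    have hFne : F.Nonempty := by
      obtain ⟨f, hf1, hf2⟩ := hex
      exact ⟨f, Finset.mem_filter.mpr ⟨hf1, hf2⟩⟩
    obtain ⟨f, hfF, hfmax⟩ := F.exists_max_image
      (fun f => max (arcd (2*n) a f.1) (arcd (2*n) a f.2)
        - min (arcd (2*n) a f.1) (arcd (2*n) a f.2)) hFne
    obtain ⟨f1, f2⟩ := f
    have hfD : (f1, f2) ∈ q.diags := (Finset.mem_filter.mp hfF).1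
    have hfEx : Excl (2*n) t a b f1 f2 z := (Finset.mem_filter.mp hfF).2
    have endpt : ∀ u w : Fin (2*n),
        ((u, w) = (f1, f2) ∨ (w, u) = (f1, f2)) → u ∈ C := by
      intro u w huw
      by_contra huC
      have hpair : (arcd (2*n) a u = arcd (2*n) a f1 ∧ arcd (2*n) a w = arcd (2*n) a f2) ∨
          (arcd (2*n) a u = arcd (2*n) a f2 ∧ arcd (2*n) a w = arcd (2*n) a f1) := by
        rcases huw with h | h
        · rw [Prod.mk.injEq] at h
          exact Or.inl ⟨by rw [h.1], by rw [h.2]⟩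
        · rw [Prod.mk.injEq] at h
          exact Or.inr ⟨by rw [h.2], by rw [h.1]⟩
      have hE1 := hfEx.2.2.1
      have hE2 := hfEx.2.2.2.1
      have hE3 := hfEx.2.2.2.2.1
      have hE4 := hfEx.2.2.2.2.2
      have hut : arcd (2*n) a u ≤ t := by omega
      rw [memC] at huC
      push_neg at huC
      obtain ⟨g, hgD, hgEx⟩ := huC hut
      have hnc := q.noncross g hgD (f1, f2) hfD
      have hnc' : ¬ Crosses (2*n) (g.1, g.2) (u, w) := by
        rcases huw with h | h
        · rw [h]; exact hnc
        · rw [crosses_swap_right, h]; exact hnc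
      have hG3 := hgEx.2.2.2.2.1
      have hG4 := hgEx.2.2.2.2.2
      have hw := lin_cross a g.1 g.2 u w hnc' hG3 hG4
      have hgEz : Excl (2*n) t a b g.1 g.2 z :=
        ⟨hgEx.1, hgEx.2.1, hgEx.2.2.1, hgEx.2.2.2.1, by omega, by omega⟩
      have hgF : g ∈ F := Finset.mem_filter.mpr ⟨hgD, hgEz⟩
      have hle := hfmax g hgF
      simp only at hle
      omega
    exact ⟨f1, f2, hfD, hfEx, endpt f1 f2 (Or.inl rfl), endpt f2 f1 (Or.inr rfl)⟩
  -- successor criterion inside the region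
  have succ_min : ∀ x y : Fin (2*n), x ∈ C → y ∈ C → arcd (2*n) a x < arcd (2*n) a y →
      (∀ z ∈ C, ¬(arcd (2*n) a x < arcd (2*n) a z ∧ arcd (2*n) a z < arcd (2*n) a y)) →
      SuccIn (2*n) C x y := by
    intro x y hx hy hlt hmid
    have hyx : y ≠ x := fun h => by rw [h] at hlt; omega
    refine ⟨hx, hy, hyx, fun z hz hzx => ?_⟩
    have hxy := arcd_coord2 a x y
    have hxz := arcd_coord2 a x z
    have hzt := hC_le z hz
    have hyt := hC_le y hy
    have hzx' : arcd (2*n) a z ≠ arcd (2*n) a x := fun h => hzx (arcd_inj h)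
    have hmz := hmid z hz
    have := arcd_lt a z
    omega
  have succ_ba : SuccIn (2*n) C b a := by
    refine ⟨hbC, haC, hane, fun z hz hzb => ?_⟩
    have hba := arcd_coord2 a b a
    have hbz := arcd_coord2 a b z
    have hzt := hC_le z hz
    have hzb' : arcd (2*n) a z ≠ arcd (2*n) a b := fun h => hzb (arcd_inj h)
    omega
  refine ⟨C, ⟨?_, ?_, ?_⟩, haC, hbC, hC_le⟩
  · -- cardinality
    obtain ⟨z1, hz1⟩ := exists_arcd a (show 1 < 2*n by omega)
    by_cases hz1C : z1 ∈ C
    · refine card3 haC hbC hz1C hane ?_ ?_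
      · intro h; have := congrArg (arcd (2*n) a) h; omega
      · intro h; have := congrArg (arcd (2*n) a) h; omega
    · obtain ⟨f1, f2, hfD, hfEx, hf1C, hf2C⟩ := key z1 (by omega) hz1C
      have hE1 := hfEx.2.2.1
      have hE2 := hfEx.2.2.2.1
      have hE3 := hfEx.2.2.2.2.1
      have hE4 := hfEx.2.2.2.2.2
      have hmaxt : max (arcd (2*n) a f1) (arcd (2*n) a f2) ≠ t := by
        intro hmt
        rcases le_total (arcd (2*n) a f1) (arcd (2*n) a f2) with hc | hc
        · have e1 : f1 = a := (arcd_inj (a := a) (by omega)).symm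
          have e2 : f2 = b := (arcd_inj (a := a) (by omega)).symm
          exact hfEx.1 ⟨e1, e2⟩
        · have e1 : f2 = a := (arcd_inj (a := a) (by omega)).symm
          have e2 : f1 = b := (arcd_inj (a := a) (by omega)).symm
          exact hfEx.2.1 ⟨e2, e1⟩
      rcases le_total (arcd (2*n) a f1) (arcd (2*n) a f2) with hc | hc
      · refine card3 haC hbC hf2C hane ?_ ?_
        · intro h; have := congrArg (arcd (2*n) a) h; omega
        · intro h; have := congrArg (arcd (2*n) a) h; omega
      · refine card3 haC hbC hf1C hane ?_ ?_
        · intro h; have := congrArg (arcd (2*n) a) h; omega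
        · intro h; have := congrArg (arcd (2*n) a) h; omega
  · -- successor pairs are edges or diagonals
    intro x y hsucc
    obtain ⟨hx, hy, hyx, hmin⟩ := hsucc
    by_cases hxy1 : arcd (2*n) x y = 1
    · exact Or.inl hxy1
    have hyx' : arcd (2*n) a y ≠ arcd (2*n) a x := fun h => hyx (arcd_inj h)
    have hxy0 : arcd (2*n) x y ≠ 0 := fun h => hyx (arcd_eq_zero_iff.mp h).symm
    have hxt' := hC_le x hx
    have hyt := hC_le y hy
    by_cases hxb : arcd (2*n) a x = t
    · -- x = b, successor must be a
      have hax : a ≠ x := by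
        intro h; have := congrArg (arcd (2*n) a) h; omega
      have h1 := hmin a haC hax
      have hxa := arcd_coord2 a x a
      have hxy := arcd_coord2 a x y
      have hya : y = a := by
        have := arcd_lt a y
        exact arcd_inj (a := a) (by omega)
      have hxb' : x = b := arcd_inj (a := a) (by omega)
      rcases hab with h | h
      · exact Or.inr (Or.inr (by rw [hya, hxb']; exact h))
      · exact Or.inr (Or.inl (by rw [hya, hxb']; exact h))
    · -- x ≠ b : look at the point just after x
      obtain ⟨z, hz⟩ := exists_arcd a (show arcd (2*n) a x + 1 < 2*n by omega)
      have hzx : z ≠ x := by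
        intro h; have := congrArg (arcd (2*n) a) h; omega
      have hzC : z ∉ C := by
        intro hzC
        have h1 := hmin z hzC hzx
        have hxz := arcd_coord2 a x z
        omega
      obtain ⟨f1, f2, hfD, hfEx, hf1C, hf2C⟩ := key z (by omega) hzC
      have hE1 := hfEx.2.2.1
      have hE2 := hfEx.2.2.2.1
      have hE3 := hfEx.2.2.2.2.1
      have hE4 := hfEx.2.2.2.2.2
      have hminx : min (arcd (2*n) a f1) (arcd (2*n) a f2) = arcd (2*n) a x := by
        by_contra hne
        exact hC_vis x hx (f1, f2) hfD
          (show Excl (2*n) t a b f1 f2 x from ⟨hfEx.1, hfEx.2.1, hE1, hE2, by omega, by omega⟩)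
      have hyE := hC_vis y hy (f1, f2) hfD
      have hyE' : ¬ (min (arcd (2*n) a f1) (arcd (2*n) a f2) < arcd (2*n) a y ∧
          arcd (2*n) a y < max (arcd (2*n) a f1) (arcd (2*n) a f2)) := by
        intro hc
        exact hyE (show Excl (2*n) t a b f1 f2 y from ⟨hfEx.1, hfEx.2.1, hE1, hE2, hc.1, hc.2⟩)
      have hkey2 : ∀ u w : Fin (2*n), ((u, w) = (f1, f2) ∨ (w, u) = (f1, f2)) →
          arcd (2*n) a u = arcd (2*n) a x →
          arcd (2*n) a w = max (arcd (2*n) a f1) (arcd (2*n) a f2) →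
          arcd (2*n) x y = 1 ∨ (x, y) ∈ q.diags ∨ (y, x) ∈ q.diags := by
        intro u w huw hu hw
        have hux : u = x := arcd_inj hu
        have hwC : w ∈ C := by
          rcases huw with h | h
          · rw [Prod.mk.injEq] at h; rw [h.2]; exact hf2C
          · rw [Prod.mk.injEq] at h; rw [h.1]; exact hf1C
        have hwx : w ≠ x := by
          intro h
          have := congrArg (arcd (2*n) a) h
          omega
        have h1 := hmin w hwC hwx
        have hxw := arcd_coord2 a x w
        have hxy := arcd_coord2 a x y
        have hyw : y = w := by
          have := arcd_lt a y
          exact arcd_inj (a := a) (by omega)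
        rcases huw with h | h
        · refine Or.inr (Or.inl ?_)
          rw [hux, ← hyw] at h
          rw [← h] at hfD
          exact hfD
        · refine Or.inr (Or.inr ?_)
          rw [hux, ← hyw] at h
          rw [← h] at hfD
          exact hfD
      rcases le_total (arcd (2*n) a f1) (arcd (2*n) a f2) with hc | hc
      · have h5 := min_eq_left hc
        have h6 := max_eq_right hc
        exact hkey2 f1 f2 (Or.inl rfl) (by omega) (by omega)
      · have h5 := min_eq_right hc
        have h6 := max_eq_left hc
        exact hkey2 f2 f1 (Or.inr rfl) (by omega) (by omega)
  · -- diagonals with both endpoints in C join consecutive vertices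
    intro d hd hd1 hd2
    by_cases hdab : d = (a, b) ∨ d = (b, a)
    · rcases hdab with h | h
      · right
        rw [h]
        exact succ_ba
      · left
        rw [h]
        exact succ_ba
    · push_neg at hdab
      have hd1ne : d ≠ (a, b) := hdab.1
      have hd2ne : d ≠ (b, a) := hdab.2
      have hd1ab : ¬(d.1 = a ∧ d.2 = b) := by
        intro hc; exact hd1ne (Prod.ext hc.1 hc.2)
      have hd2ab : ¬(d.1 = b ∧ d.2 = a) := by
        intro hc; exact hd2ne (Prod.ext hc.1 hc.2)
      have hd12 : arcd (2*n) a d.1 ≠ arcd (2*n) a d.2 := by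
        intro h
        have h12 : d.1 = d.2 := arcd_inj h
        exact (q.isDiag d hd).1 (by rw [arcd_eq_zero_iff, h12])
      have hnomid : ∀ z ∈ C, ¬(min (arcd (2*n) a d.1) (arcd (2*n) a d.2) < arcd (2*n) a z ∧
          arcd (2*n) a z < max (arcd (2*n) a d.1) (arcd (2*n) a d.2)) := by
        intro z hz hc
        exact hC_vis z hz d hd
          ⟨hd1ab, hd2ab, hC_le d.1 hd1, hC_le d.2 hd2, hc.1, hc.2⟩
      rcases lt_or_gt_of_ne hd12 with hc | hc
      · left
        exact succ_min d.1 d.2 hd1 hd2 hc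
          (fun z hz hzc => hnomid z hz ⟨by omega, by omega⟩)
      · right
        exact succ_min d.2 d.1 hd2 hd1 hc
          (fun z hz hzc => hnomid z hz ⟨by omega, by omega⟩)

end QD

namespace QD

lemma odd_arc {n : ℕ} (q : QDiss n) :
    ∀ t : ℕ, ∀ a b : Fin (2*n), ((a, b) ∈ q.diags ∨ (b, a) ∈ q.diags) →
      arcd (2*n) a b = t → Odd t := by
  intro t
  induction t using Nat.strong_induction_on with
  | _ t IH =>
  intro a b hab hteq
  obtain ⟨C, hcell, haC, hbC, hle⟩ := region_cell q hab
  have hcard := q.quad C hcell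
  have hane : a ≠ b := by
    intro he
    rcases hab with h | h
    · exact (q.isDiag _ h).1 (show arcd (2*n) a b = 0 by rw [he]; exact arcd_self b)
    · exact (q.isDiag _ h).1 (show arcd (2*n) b a = 0 by rw [he]; exact arcd_self b)
  have hsymm := arcd_symm hane
  have ht2 : 2 ≤ arcd (2*n) a b := by
    have h0 : arcd (2*n) a b ≠ 0 := fun hc => hane (arcd_eq_zero_iff.mp hc)
    rcases hab with h | h
    · have h2 : arcd (2*n) a b ≠ 1 := (q.isDiag _ h).2.1
      omega
    · have h2 : arcd (2*n) a b ≠ 1 := (q.isDiag _ h).2.2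
      omega
  have htm : arcd (2*n) a b + 2 ≤ 2*n := by
    have h0 : arcd (2*n) b a ≠ 0 := fun hc => hane (arcd_eq_zero_iff.mp hc).symm
    rcases hab with h | h
    · have h2 : arcd (2*n) b a ≠ 1 := (q.isDiag _ h).2.2
      omega
    · have h2 : arcd (2*n) b a ≠ 1 := (q.isDiag _ h).2.1
      omega
  have haa := arcd_self a
  -- any side of the cell whose arc is shorter than t has odd arc
  have side_odd : ∀ x y : Fin (2*n), SuccIn (2*n) C x y → arcd (2*n) x y < t →
      Odd (arcd (2*n) x y) := by
    intro x y hs hlt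
    rcases hcell.2.1 x y hs with h | h | h
    · rw [h]; exact odd_one
    · exact IH _ hlt x y (Or.inl h) rfl
    · exact IH _ hlt x y (Or.inr h) rfl
  -- extract the two middle vertices
  have hbmem : b ∈ C.erase a := Finset.mem_erase.mpr ⟨Ne.symm hane, hbC⟩
  have hC2 : ((C.erase a).erase b).card = 2 := by
    rw [Finset.card_erase_of_mem hbmem, Finset.card_erase_of_mem haC, hcard]
  obtain ⟨c1, c2, hc12, hC'⟩ := Finset.card_eq_two.mp hC2
  have hc1mem : c1 ∈ (C.erase a).erase b := by rw [hC']; simp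
  have hc2mem : c2 ∈ (C.erase a).erase b := by rw [hC']; simp
  have hc1C : c1 ∈ C := Finset.mem_of_mem_erase (Finset.mem_of_mem_erase hc1mem)
  have hc2C : c2 ∈ C := Finset.mem_of_mem_erase (Finset.mem_of_mem_erase hc2mem)
  have hc1a : c1 ≠ a := Finset.ne_of_mem_erase (Finset.mem_of_mem_erase hc1mem)
  have hc2a : c2 ≠ a := Finset.ne_of_mem_erase (Finset.mem_of_mem_erase hc2mem)
  have hc1b : c1 ≠ b := Finset.ne_of_mem_erase hc1mem
  have hc2b : c2 ≠ b := Finset.ne_of_mem_erase hc2mem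
  have hCeq : C = {a, c1, c2, b} := by
    have hsub : ({a, c1, c2, b} : Finset (Fin (2*n))) ⊆ C := by
      intro w hw
      simp only [Finset.mem_insert, Finset.mem_singleton] at hw
      rcases hw with rfl | rfl | rfl | rfl <;> assumption
    have hdist : ({a, c1, c2, b} : Finset (Fin (2*n))).card = 4 := by
      rw [Finset.card_insert_of_notMem (by simp [Ne.symm hc1a, Ne.symm hc2a, hane]),
        Finset.card_insert_of_notMem (by simp [hc12, hc1b]),
        Finset.card_insert_of_notMem (by simp [hc2b]), Finset.card_singleton]
    exact (Finset.eq_of_subset_of_card_le hsub (by omega)).symm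
  -- coordinates of the middle vertices
  have hcoord : ∀ c : Fin (2*n), c ∈ C → c ≠ a → c ≠ b →
      0 < arcd (2*n) a c ∧ arcd (2*n) a c < arcd (2*n) a b := by
    intro c hc hca hcb
    have h1 := hle c hc
    have h2 : arcd (2*n) a c ≠ 0 := fun h => hca (arcd_eq_zero_iff.mp h).symm
    have h3 : arcd (2*n) a c ≠ arcd (2*n) a b := fun h => hcb (arcd_inj h)
    omega
  have hc1co := hcoord c1 hc1C hc1a hc1b
  have hc2co := hcoord c2 hc2C hc2a hc2b
  have hc1c2 : arcd (2*n) a c1 ≠ arcd (2*n) a c2 := fun h => hc12 (arcd_inj h)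
  -- the generic ordered case
  have main2 : ∀ u v : Fin (2*n), u ∈ C → v ∈ C → C = {a, u, v, b} →
      0 < arcd (2*n) a u → arcd (2*n) a u < arcd (2*n) a v →
      arcd (2*n) a v < arcd (2*n) a b → Odd t := by
    intro u v huC hvC hCuv hu0 huv hvt
    have hmem : ∀ z ∈ C, z = a ∨ z = u ∨ z = v ∨ z = b := by
      intro z hz
      rw [hCuv] at hz
      simpa using hz
    have hua : u ≠ a := fun h => by rw [h] at hu0; omega
    have hvu : v ≠ u := fun h => by rw [h] at huv; omega
    have hbv : b ≠ v := fun h => by rw [h] at hvt; omega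
    -- successor chains
    have hsa : SuccIn (2*n) C a u := by
      refine ⟨haC, huC, hua, fun z hz hza => ?_⟩
      have hz0 : arcd (2*n) a z ≠ 0 := fun h => hza (arcd_eq_zero_iff.mp h).symm
      rcases hmem z hz with rfl | rfl | rfl | rfl <;> omega
    have hs1 : SuccIn (2*n) C u v := by
      refine ⟨huC, hvC, hvu, fun z hz hzu => ?_⟩
      have h1 := arcd_coord2 a u v
      have h2 := arcd_coord2 a u z
      have h3 := arcd_lt a v
      have h4 := arcd_lt a z
      have hz0 : arcd (2*n) a z ≠ arcd (2*n) a u := fun h => hzu (arcd_inj h)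
      rcases hmem z hz with rfl | rfl | rfl | rfl <;> omega
    have hs2 : SuccIn (2*n) C v b := by
      refine ⟨hvC, hbC, hbv, fun z hz hzv => ?_⟩
      have h1 := arcd_coord2 a v b
      have h2 := arcd_coord2 a v z
      have h3 := arcd_lt a b
      have h4 := arcd_lt a z
      have hz0 : arcd (2*n) a z ≠ arcd (2*n) a v := fun h => hzv (arcd_inj h)
      rcases hmem z hz with rfl | rfl | rfl | rfl <;> omega
    -- the three gaps
    have e1 : arcd (2*n) a u + arcd (2*n) u v + arcd (2*n) v b = t := by
      have h1 := arcd_coord2 a u v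
      have h2 := arcd_coord2 a v b
      omega
    have g1 := side_odd a u hsa (by omega)
    have g2 := side_odd u v hs1 (by
      have h1 := arcd_coord2 a u v
      have h2 := arcd_coord2 a v b
      have h3 : arcd (2*n) v b ≠ 0 := fun h => hbv (arcd_eq_zero_iff.mp h).symm
      omega)
    have g3 := side_odd v b hs2 (by
      have h2 := arcd_coord2 a v b
      omega)
    rw [Nat.odd_iff] at g1 g2 g3 ⊢
    omega
  rcases lt_or_gt_of_ne hc1c2 with hlt | hlt
  · exact main2 c1 c2 hc1C hc2C hCeq (by omega) hlt (by omega)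
  · refine main2 c2 c1 hc2C hc1C ?_ (by omega) hlt (by omega)
    rw [hCeq]
    ext w
    simp only [Finset.mem_insert, Finset.mem_singleton]
    tauto

lemma odd_arcs {n : ℕ} (q : QDiss n) :
    ∀ e ∈ q.diags, Odd (arcd (2*n) e.1 e.2) ∧ Odd (arcd (2*n) e.2 e.1) :=
  fun e he =>
    ⟨odd_arc q _ e.1 e.2 (Or.inl he) rfl, odd_arc q _ e.2 e.1 (Or.inr he) rfl⟩

lemma no_diameter {n : ℕ} (hn : Even n) (q : QDiss n) :
    ∀ d ∈ q.diags, d.2.val ≠ d.1.val + n := by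
  intro d hd h
  have hodd := (odd_arcs q d hd).1
  obtain ⟨h1, h2⟩ := arcd_spec d.1 d.2
  have h3 := d.1.isLt
  have h4 := d.2.isLt
  have harc : arcd (2*n) d.1 d.2 = n := by omega
  rw [harc, Nat.odd_iff] at hodd
  rw [Nat.even_iff] at hn
  omega

end QD

namespace QD

/-- `x` lies strictly inside the short arc of the diagonal `e` (the side away
from the center). -/
def Bad (m n : ℕ) (e : Fin m × Fin m) (x : Fin m) : Prop :=
  (arcd m e.1 e.2 < n ∧ btwn m e.1 x e.2) ∨
  (n < arcd m e.1 e.2 ∧ btwn m e.2 x e.1)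

/-- Width of the short side of a diagonal. -/
def Wdt (m : ℕ) (e : Fin m × Fin m) : ℕ :=
  min (arcd m e.1 e.2) (m - arcd m e.1 e.2)

lemma btwn_rot {n : ℕ} (u x v : Fin (2*n)) :
    btwn (2*n) (rotBy (2*n) n u) (rotBy (2*n) n x) (rotBy (2*n) n v) ↔
      btwn (2*n) u x v := by
  unfold btwn
  rw [arcd_rot, arcd_rot]

lemma central_cell {n : ℕ} (hev : Even n) (hn1 : 0 < n) (q : QDiss n)
    (hq : RotInvBy n n q) :
    ∃ C : Finset (Fin (2*n)), IsCell (2*n) q.diags C ∧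
      ∀ x ∈ C, rotBy (2*n) n x ∈ C := by
  classical
  have hn2 : 2 ≤ n := by
    rw [Nat.even_iff] at hev; omega
  rcases Finset.eq_empty_or_nonempty q.diags with hD | hD
  · -- no diagonals at all: n = 2 and the whole square is the cell
    refine ⟨Finset.univ, ⟨?_, ?_, ?_⟩, fun x _ => Finset.mem_univ _⟩
    · rw [Finset.card_univ, Fintype.card_fin]; omega
    · intro x y hs
      obtain ⟨hx, hy, hyx, hmin⟩ := hs
      obtain ⟨z, hz⟩ := exists_arcd x (show 1 < 2*n by omega)
      have hzx : z ≠ x := by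
        intro h; rw [h, arcd_self] at hz; omega
      have h1 := hmin z (Finset.mem_univ z) hzx
      have h0 : arcd (2*n) x y ≠ 0 := fun h => hyx (arcd_eq_zero_iff.mp h).symm
      exact Or.inl (by omega)
    · intro d hd
      rw [hD] at hd
      exact absurd hd (Finset.notMem_empty d)
  · -- main case
    set C := Finset.univ.filter (fun x => ∀ e ∈ q.diags, ¬ Bad (2*n) n e x) with hCdef
    have memC : ∀ x : Fin (2*n), x ∈ C ↔ ∀ e ∈ q.diags, ¬ Bad (2*n) n e x := by
      intro x; simp [hCdef]
    have hfacts : ∀ e ∈ q.diags, 2 ≤ arcd (2*n) e.1 e.2 ∧ 2 ≤ arcd (2*n) e.2 e.1 ∧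
        arcd (2*n) e.1 e.2 + arcd (2*n) e.2 e.1 = 2*n ∧ arcd (2*n) e.1 e.2 ≠ n := by
      intro e he
      have hp := q.isDiag e he
      have h1 : arcd (2*n) e.1 e.2 ≠ 0 := hp.1
      have hne : e.1 ≠ e.2 := fun h => h1 (by rw [h]; exact arcd_self e.2)
      have hs := arcd_symm hne
      have h2 : arcd (2*n) e.1 e.2 ≠ 1 := hp.2.1
      have h3 : arcd (2*n) e.2 e.1 ≠ 1 := hp.2.2
      have ho := (odd_arcs q e he).1
      rw [Nat.odd_iff] at ho
      have he' := hev
      rw [Nat.even_iff] at he'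
      have h4 := arcd_lt e.1 e.2
      refine ⟨by omega, by omega, hs, by omega⟩
    have shortiff : ∀ e ∈ q.diags, ∃ u v : Fin (2*n), ((u, v) = e ∨ (v, u) = e) ∧
        2 ≤ arcd (2*n) u v ∧ arcd (2*n) u v < n ∧
        Wdt (2*n) e = arcd (2*n) u v ∧
        (∀ x, Bad (2*n) n e x ↔ btwn (2*n) u x v) := by
      intro e he
      obtain ⟨f1, f2, f3, f4⟩ := hfacts e he
      rcases lt_or_gt_of_ne f4 with hlt | hgt
      · refine ⟨e.1, e.2, Or.inl rfl, f1, hlt, by unfold Wdt; omega, fun x => ?_⟩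
        constructor
        · rintro (⟨h1, h2⟩ | ⟨h1, h2⟩)
          · exact h2
          · omega
        · intro h; exact Or.inl ⟨hlt, h⟩
      · refine ⟨e.2, e.1, Or.inr rfl, f2, by omega, by unfold Wdt; omega, fun x => ?_⟩
        constructor
        · rintro (⟨h1, h2⟩ | ⟨h1, h2⟩)
          · omega
          · exact h2
        · intro h; exact Or.inr ⟨hgt, h⟩
    -- invariance under the half-turn
    have hinv : ∀ x ∈ C, rotBy (2*n) n x ∈ C := by
      intro x hx
      rw [memC]
      intro e he hbad
      have hxC := (memC x).mp hx
      obtain ⟨f1, f2, f3, f4⟩ := hfacts e he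
      rcases hq e he with h' | h'
      · refine hxC _ h' ?_
        rcases hbad with ⟨h1, h2⟩ | ⟨h1, h2⟩
        · left
          refine ⟨?_, ?_⟩
          · show arcd (2*n) (rotBy (2*n) n e.1) (rotBy (2*n) n e.2) < n
            rw [arcd_rot]; exact h1
          · show btwn (2*n) (rotBy (2*n) n e.1) x (rotBy (2*n) n e.2)
            rw [← rot_invol x, btwn_rot]
            exact h2
        · right
          refine ⟨?_, ?_⟩
          · show n < arcd (2*n) (rotBy (2*n) n e.1) (rotBy (2*n) n e.2)
            rw [arcd_rot]; exact h1
          · show btwn (2*n) (rotBy (2*n) n e.2) x (rotBy (2*n) n e.1)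
            rw [← rot_invol x, btwn_rot]
            exact h2
      · refine hxC _ h' ?_
        rcases hbad with ⟨h1, h2⟩ | ⟨h1, h2⟩
        · right
          refine ⟨?_, ?_⟩
          · show n < arcd (2*n) (rotBy (2*n) n e.2) (rotBy (2*n) n e.1)
            rw [arcd_rot]; omega
          · show btwn (2*n) (rotBy (2*n) n e.1) x (rotBy (2*n) n e.2)
            rw [← rot_invol x, btwn_rot]
            exact h2
        · left
          refine ⟨?_, ?_⟩
          · show arcd (2*n) (rotBy (2*n) n e.2) (rotBy (2*n) n e.1) < n
            rw [arcd_rot]; omega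
          · show btwn (2*n) (rotBy (2*n) n e.2) x (rotBy (2*n) n e.1)
            rw [← rot_invol x, btwn_rot]
            exact h2
    -- endpoints of a locally maximal short diagonal are visible
    have endC : ∀ f ∈ q.diags, ∀ u v z : Fin (2*n), ((u, v) = f ∨ (v, u) = f) →
        arcd (2*n) u v < n → btwn (2*n) u z v →
        (∀ g ∈ q.diags, Bad (2*n) n g z → Wdt (2*n) g ≤ Wdt (2*n) f) →
        u ∈ C ∧ v ∈ C := by
      intro f hfD u v z hor hlt hbz hmax
      have hbz' : 0 < arcd (2*n) u z ∧ arcd (2*n) u z < arcd (2*n) u v := hbz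
      have huvne : u ≠ v := by
        intro h
        rw [h, arcd_self] at hbz'
        omega
      have hsymuv := arcd_symm huvne
      have hwf : Wdt (2*n) f = arcd (2*n) u v := by
        rcases hor with h | h
        · rw [← h]
          show min (arcd (2*n) u v) (2*n - arcd (2*n) u v) = arcd (2*n) u v
          omega
        · rw [← h]
          show min (arcd (2*n) v u) (2*n - arcd (2*n) v u) = arcd (2*n) u v
          omega
      have inC : ∀ w : Fin (2*n), (w = u ∨ w = v) → w ∈ C := by
        intro w hw
        by_contra hwC
        rw [memC] at hwC
        push_neg at hwC
        obtain ⟨g, hgD, hgBad⟩ := hwC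
        obtain ⟨p, pq, hor2, h2pq, hlt2, hwg, hiff2⟩ := shortiff g hgD
        have hbw : btwn (2*n) p w pq := (hiff2 w).mp hgBad
        have hnc : ¬ Crosses (2*n) (p, pq) (u, v) := by
          intro hc
          apply q.noncross g hgD f hfD
          rcases hor2 with h2 | h2 <;> rcases hor with h1 | h1 <;> rw [← h2, ← h1]
          · exact hc
          · exact crosses_swap_right.mp hc
          · exact crosses_swap_left.mp hc
          · exact crosses_swap_left.mp (crosses_swap_right.mp hc)
        have hst := star hlt hlt2 (by
          rcases hw with rfl | rfl
          · exact Or.inl hbw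
          · exact Or.inr hbw) hnc
        have hgz : Bad (2*n) n g z := (hiff2 z).mpr (hst.2 z hbz)
        have hle := hmax g hgD hgz
        rw [hwf, hwg] at hle
        omega
      exact ⟨inC u (Or.inl rfl), inC v (Or.inr rfl)⟩
    refine ⟨C, ⟨?_, ?_, ?_⟩, hinv⟩
    · -- cardinality
      obtain ⟨f, hfD, hfmax⟩ := q.diags.exists_max_image (Wdt (2*n)) hD
      obtain ⟨u, v, hor, h2uv, hltuv, hwf, hiff⟩ := shortiff f hfD
      obtain ⟨z, hz⟩ := exists_arcd u (show 1 < 2*n by omega)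
      have hbz : btwn (2*n) u z v :=
        show 0 < arcd (2*n) u z ∧ arcd (2*n) u z < arcd (2*n) u v from ⟨by omega, by omega⟩
      obtain ⟨huC, hvC⟩ := endC f hfD u v z hor hltuv hbz (fun g hg _ => hfmax g hg)
      have hσu : rotBy (2*n) n u ∈ C := hinv u huC
      have harot := arcd_rot_self hn1 u
      refine card3 huC hvC hσu ?_ ?_ ?_
      · intro h; rw [h, arcd_self] at h2uv; omega
      · intro h; rw [← h, arcd_self] at harot; omega
      · intro h; rw [← h] at harot; omega
    · -- successor pairs are edges or diagonals
      intro x y hs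
      obtain ⟨hx, hy, hyx, hmin⟩ := hs
      by_cases hxy1 : arcd (2*n) x y = 1
      · exact Or.inl hxy1
      have hxy0 : arcd (2*n) x y ≠ 0 := fun h => hyx (arcd_eq_zero_iff.mp h).symm
      obtain ⟨z, hz⟩ := exists_arcd x (show 1 < 2*n by omega)
      have hzx : z ≠ x := by
        intro h; rw [h, arcd_self] at hz; omega
      have hzC : z ∉ C := by
        intro hzC
        have := hmin z hzC hzx
        omega
      rw [memC] at hzC
      push_neg at hzC
      obtain ⟨e1, he1D, he1B⟩ := hzC
      obtain ⟨f, hfF, hfmax⟩ := (q.diags.filter (fun e => Bad (2*n) n e z)).exists_max_image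
        (Wdt (2*n)) ⟨e1, Finset.mem_filter.mpr ⟨he1D, he1B⟩⟩
      have hfD := (Finset.mem_filter.mp hfF).1
      have hfB := (Finset.mem_filter.mp hfF).2
      obtain ⟨u, v, hor, h2uv, hltuv, hwf, hiff⟩ := shortiff f hfD
      have hbz : btwn (2*n) u z v := (hiff z).mp hfB
      have hbz' : 0 < arcd (2*n) u z ∧ arcd (2*n) u z < arcd (2*n) u v := hbz
      obtain ⟨huC, hvC⟩ := endC f hfD u v z hor hltuv hbz
        (fun g hg hgB => hfmax g (Finset.mem_filter.mpr ⟨hg, hgB⟩))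
      -- u must be x
      have hux : u = x := by
        have hc := arcd_coord2 u x z
        have h3 := arcd_lt u x
        have h4 := arcd_lt u z
        by_cases h5 : arcd (2*n) u z = 1
        · exact arcd_eq_zero_iff.mp (show arcd (2*n) u x = 0 by omega)
        · exfalso
          have hxin : btwn (2*n) u x v :=
            show 0 < arcd (2*n) u x ∧ arcd (2*n) u x < arcd (2*n) u v from
              ⟨by omega, by omega⟩
          exact (memC x).mp hx f hfD ((hiff x).mpr hxin)
      -- v must be y
      have hvx : v ≠ x := by
        intro h
        have hvu : v = u := h.trans hux.symm
        rw [hvu, arcd_self] at hbz'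
        omega
      have h6 := hmin v hvC hvx
      have hyB := (memC y).mp hy f hfD
      have hyb' : ¬ (0 < arcd (2*n) u y ∧ arcd (2*n) u y < arcd (2*n) u v) :=
        fun hh => hyB ((hiff y).mpr hh)
      have hyu : arcd (2*n) u y ≠ 0 := by
        intro h
        have h7 : u = y := arcd_eq_zero_iff.mp h
        exact hyx (by rw [← h7, hux])
      rw [hux] at hyb' hyu
      rw [hux] at hor
      have hyv : y = v := arcd_inj (a := x) (by omega)
      rcases hor with h | h
      · refine Or.inr (Or.inl ?_)
        rw [hyv, h]
        exact hfD
      · refine Or.inr (Or.inr ?_)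
        rw [hyv, h]
        exact hfD
    · -- diagonals with both endpoints visible join consecutive vertices
      intro d hd h1 h2
      obtain ⟨u, v, hor, h2uv, hltuv, hwd, hiff⟩ := shortiff d hd
      have huv : SuccIn (2*n) C u v := by
        have huC : u ∈ C := by
          rcases hor with h | h
          · rw [← h] at h1; exact h1
          · rw [← h] at h2; exact h2
        have hvC : v ∈ C := by
          rcases hor with h | h
          · rw [← h] at h2; exact h2
          · rw [← h] at h1; exact h1
        have hvu : v ≠ u := by
          intro h
          rw [h, arcd_self] at h2uv
          omega
        refine ⟨huC, hvC, hvu, fun z hz hzu => ?_⟩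
        have hnb := (memC z).mp hz d hd
        have h3 : ¬ (0 < arcd (2*n) u z ∧ arcd (2*n) u z < arcd (2*n) u v) :=
          fun hh => hnb ((hiff z).mpr hh)
        have h4 : arcd (2*n) u z ≠ 0 := fun h => hzu (arcd_eq_zero_iff.mp h).symm
        omega
      rcases hor with h | h
      · exact Or.inl (by rw [← h]; exact huv)
      · exact Or.inr (by rw [← h]; exact huv)

end QD

/-- For even `n > 0`, a quadrangular dissection of a convex `2n`-gon invariant
under the central rotation by π has no diameter among its diagonals, and has a
cell invariant under this rotation (containing the center). -/
theorem qdiss_rotpi_invariant_even (n : ℕ) (hn : Even n) (hpos : 0 < n)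
    (q : QDiss n) (hq : RotInvBy n n q) :
    (∀ d ∈ q.diags, d.2.val ≠ d.1.val + n) ∧
    ∃ C : Finset (Fin (2*n)), IsCell (2*n) q.diags C ∧
      ∀ x ∈ C, rotBy (2*n) n x ∈ C := by
  exact ⟨QD.no_diameter hn q, QD.central_cell hn hpos q hq⟩
end

section
/- For n ≡ 0 (mod 4), no quadrangular dissection of a convex 2n-gon is invariant under rotation by π/2 radians; equivalently, in this case the rotation by π/2 has no fixed points on the set of such dissections. -/
section Aux

lemma rotBy_rotBy (m j k : ℕ) (x : Fin m) :
    rotBy m k (rotBy m j x) = rotBy m (j + k) x := by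
  unfold rotBy
  apply Fin.ext
  simp only
  rw [Nat.mod_add_mod, Nat.add_assoc]

lemma rotBy_self (m : ℕ) (x : Fin m) : rotBy m m x = x := by
  unfold rotBy
  apply Fin.ext
  simp only
  rw [Nat.add_mod_right]
  exact Nat.mod_eq_of_lt x.isLt

lemma rotBy_fix {m k : ℕ} {x : Fin m} (h : rotBy m k x = x) : k % m = 0 := by
  have hx := x.isLt
  have h' : (x.val + k) % m = x.val := congrArg Fin.val h
  have h2 : (x.val + k) % m = x.val % m := by rw [h', Nat.mod_eq_of_lt hx]
  have h3 : m ∣ (x.val + k - x.val) :=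
    (Nat.modEq_iff_dvd' (Nat.le_add_right _ _)).mp h2.symm
  rw [Nat.add_sub_cancel_left] at h3
  obtain ⟨c, rfl⟩ := h3
  simp [Nat.mul_mod_right]

lemma arcd_rotBy (m k : ℕ) (a : Fin m) : arcd m a (rotBy m k a) = k % m := by
  have ha := a.isLt
  unfold arcd rotBy
  simp only
  have h1 : ∀ x : ℕ, x + m - a.val = x + (m - a.val) := fun x => by omega
  rw [h1, Nat.mod_add_mod]
  have h2 : a.val + k + (m - a.val) = k + m := by omega
  rw [h2, Nat.add_mod_right]

lemma pair_eq_cases {α : Type*} [DecidableEq α] {a b c d : α}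
    (h : ({a, b} : Finset α) = {c, d}) :
    (a = c ∧ b = d) ∨ (a = d ∧ b = c) := by
  simp only [Finset.ext_iff, Finset.mem_insert, Finset.mem_singleton] at h
  have ha : a = c ∨ a = d := (h a).mp (Or.inl rfl)
  have hb : b = c ∨ b = d := (h b).mp (Or.inr rfl)
  have hc : c = a ∨ c = b := (h c).mpr (Or.inl rfl)
  have hd2 : d = a ∨ d = b := (h d).mpr (Or.inr rfl)
  rcases ha with h1 | h1
  · rcases hb with h2 | h2
    · refine Or.inl ⟨h1, ?_⟩
      rcases hd2 with h3 | h3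
      · rw [h2, ← h1, ← h3]
      · exact h3.symm
    · exact Or.inl ⟨h1, h2⟩
  · rcases hb with h2 | h2
    · exact Or.inr ⟨h1, h2⟩
    · refine Or.inl ⟨?_, h2⟩
      rcases hc with h3 | h3
      · exact h3.symm
      · rw [h1, ← h2, ← h3]

lemma pair_eq_of_lt {m : ℕ} {a b c d : Fin m} (hab : a < b) (hcd : c < d)
    (h : ({a, b} : Finset (Fin m)) = {c, d}) : a = c ∧ b = d := by
  rcases pair_eq_cases h with ⟨h1, h2⟩ | ⟨h1, h2⟩
  · exact ⟨h1, h2⟩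
  · exfalso
    rw [h1, h2] at hab
    exact absurd hab (lt_asymm hcd)

lemma four_dvd {α : Type*} [DecidableEq α] (f : α → α) :
    ∀ s : Finset α, (∀ x ∈ s, f x ∈ s) → (∀ x ∈ s, f x ≠ x) →
      (∀ x ∈ s, f (f x) ≠ x) → (∀ x ∈ s, f (f (f (f x))) = x) → 4 ∣ s.card := by
  intro s
  induction s using Finset.strongInduction with
  | _ s ih =>
    intro hmem hfix hfix2 h4
    rcases s.eq_empty_or_nonempty with rfl | ⟨a, ha⟩
    · simp
    have hfa : f a ∈ s := hmem a ha
    have hffa : f (f a) ∈ s := hmem _ hfa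
    have hfffa : f (f (f a)) ∈ s := hmem _ hffa
    have hinj : ∀ x ∈ s, ∀ y ∈ s, f x = f y → x = y := by
      intro x hx y hy h
      have := congrArg (fun z => f (f (f z))) h
      rwa [h4 x hx, h4 y hy] at this
    have d01 : a ≠ f a := fun h => hfix a ha h.symm
    have d02 : a ≠ f (f a) := fun h => hfix2 a ha h.symm
    have d03 : a ≠ f (f (f a)) := by
      intro h
      have : f a = a := by
        conv_lhs => rw [h]
        exact h4 a ha
      exact hfix a ha this
    have d12 : f a ≠ f (f a) := fun h => d01 (hinj a ha (f a) hfa h)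
    have d13 : f a ≠ f (f (f a)) := fun h => d02 (hinj a ha (f (f a)) hffa h)
    have d23 : f (f a) ≠ f (f (f a)) := fun h => d12 (hinj (f a) hfa (f (f a)) hffa h)
    set o : Finset α := {a, f a, f (f a), f (f (f a))} with ho
    have hosub : o ⊆ s := by
      intro x hx
      simp only [ho, Finset.mem_insert, Finset.mem_singleton] at hx
      rcases hx with rfl | rfl | rfl | rfl <;> assumption
    have hocard : o.card = 4 := by
      rw [ho]
      rw [Finset.card_insert_of_notMem (by simp [d01, d02, d03]),
        Finset.card_insert_of_notMem (by simp [d12, d13]),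
        Finset.card_insert_of_notMem (by simp [d23]),
        Finset.card_singleton]
    set t : Finset α := s \ o with htdef
    have hts : t ⊂ s := by
      refine Finset.sdiff_ssubset ?_ ?_
      · exact hosub
      · exact ⟨a, by simp [ho]⟩
    have htcard : s.card = t.card + 4 := by
      have h1 : t.card = s.card - o.card := Finset.card_sdiff_of_subset hosub
      have h2 : o.card ≤ s.card := Finset.card_le_card hosub
      omega
    have htmem : ∀ x ∈ t, f x ∈ t := by
      intro x hx
      rw [htdef, Finset.mem_sdiff] at hx ⊢
      obtain ⟨hxs, hxo⟩ := hx
      refine ⟨hmem x hxs, ?_⟩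
      simp only [ho, Finset.mem_insert, Finset.mem_singleton] at hxo ⊢
      push_neg at hxo ⊢
      obtain ⟨hx0, hx1, hx2, hx3⟩ := hxo
      refine ⟨?_, ?_, ?_, ?_⟩
      · intro h
        apply hx3
        have := congrArg (fun z => f (f (f z))) h
        rw [h4 x hxs] at this
        exact this
      · intro h
        exact hx0 (hinj x hxs a ha h)
      · intro h
        exact hx1 (hinj x hxs (f a) hfa h)
      · intro h
        exact hx2 (hinj x hxs (f (f a)) hffa h)
    have hdvd : 4 ∣ t.card := by
      refine ih t hts htmem ?_ ?_ ?_
      · exact fun x hx => hfix x (Finset.mem_sdiff.mp hx).1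
      · exact fun x hx => hfix2 x (Finset.mem_sdiff.mp hx).1
      · exact fun x hx => h4 x (Finset.mem_sdiff.mp hx).1
    omega

/-- The rotation map on diagonals of a dissection, normalized into the dissection. -/
def qrot (n : ℕ) (q : QDiss n) (d : Fin (2*n) × Fin (2*n)) : Fin (2*n) × Fin (2*n) :=
  if (rotBy (2*n) (n/2) d.1, rotBy (2*n) (n/2) d.2) ∈ q.diags
  then (rotBy (2*n) (n/2) d.1, rotBy (2*n) (n/2) d.2)
  else (rotBy (2*n) (n/2) d.2, rotBy (2*n) (n/2) d.1)

end Aux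

/-- For `n ≡ 0 (mod 4)`, no quadrangular dissection of a convex `2n`-gon is
invariant under rotation by π/2 (a shift by `n/2` vertices). -/
theorem qdiss_no_quarter_rotation_invariant (n : ℕ) (h4 : n % 4 = 0) (hpos : 0 < n)
    (q : QDiss n) : ¬ RotInvBy n (n / 2) q := by
  intro hinv
  have hn4 : 4 ≤ n := by omega
  have hk0 : 0 < n / 2 := by omega
  have hkm : n / 2 < 2 * n := by omega
  have rot_ne : ∀ (j : ℕ), 0 < j → j < 2 * n → ∀ x : Fin (2*n), rotBy (2*n) j x ≠ x := by
    intro j hj1 hj2 x h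
    have := rotBy_fix h
    rw [Nat.mod_eq_of_lt hj2] at this
    omega
  have key : ∀ d ∈ q.diags, qrot n q d ∈ q.diags ∧
      ({(qrot n q d).1, (qrot n q d).2} : Finset (Fin (2*n)))
        = {rotBy (2*n) (n/2) d.1, rotBy (2*n) (n/2) d.2} := by
    intro d hd
    unfold qrot
    by_cases h : (rotBy (2*n) (n/2) d.1, rotBy (2*n) (n/2) d.2) ∈ q.diags
    · rw [if_pos h]
      exact ⟨h, rfl⟩
    · rw [if_neg h]
      rcases hinv d hd with h' | h'
      · exact absurd h' h
      · exact ⟨h', Finset.pair_comm _ _⟩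
  have hU : ∀ d ∈ q.diags, ({(qrot n q d).1, (qrot n q d).2} : Finset (Fin (2*n)))
      = Finset.image (rotBy (2*n) (n/2)) {d.1, d.2} := by
    intro d hd
    rw [(key d hd).2]
    simp [Finset.image_insert, Finset.image_singleton]
  have hrot4 : ∀ x : Fin (2*n),
      rotBy (2*n) (n/2) (rotBy (2*n) (n/2) (rotBy (2*n) (n/2) (rotBy (2*n) (n/2) x))) = x := by
    intro x
    rw [rotBy_rotBy, rotBy_rotBy, rotBy_rotBy]
    have hsum : n/2 + (n/2 + (n/2 + n/2)) = 2*n := by omega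
    rw [hsum]
    exact rotBy_self _ x
  have hfix : ∀ d ∈ q.diags, qrot n q d ≠ d := by
    intro d hd heq
    have e := (key d hd).2
    rw [heq] at e
    have m1 : rotBy (2*n) (n/2) d.1 ∈ ({d.1, d.2} : Finset (Fin (2*n))) := by
      rw [e]; simp
    have m2 : rotBy (2*n) (n/2) d.2 ∈ ({d.1, d.2} : Finset (Fin (2*n))) := by
      rw [e]; simp
    simp only [Finset.mem_insert, Finset.mem_singleton] at m1 m2
    have hm1 : rotBy (2*n) (n/2) d.1 = d.2 := m1.resolve_left (rot_ne _ hk0 hkm d.1)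
    have hm2 : rotBy (2*n) (n/2) d.2 = d.1 := by
      rcases m2 with h | h
      · exact h
      · exact absurd h (rot_ne _ hk0 hkm d.2)
    have hbad : rotBy (2*n) (n/2 + n/2) d.1 = d.1 := by
      rw [← rotBy_rotBy, hm1, hm2]
    exact rot_ne (n/2 + n/2) (by omega) (by omega) d.1 hbad
  have hfix2 : ∀ d ∈ q.diags, qrot n q (qrot n q d) ≠ d := by
    intro d hd heq
    have hfd := (key d hd).1
    have e2 := hU _ hfd
    rw [heq, hU d hd] at e2
    simp only [Finset.image_insert, Finset.image_singleton] at e2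
    rw [rotBy_rotBy, rotBy_rotBy] at e2
    have m1 : rotBy (2*n) (n/2 + n/2) d.1 ∈ ({d.1, d.2} : Finset (Fin (2*n))) := by
      rw [e2]; simp
    simp only [Finset.mem_insert, Finset.mem_singleton] at m1
    have hm1 : rotBy (2*n) (n/2 + n/2) d.1 = d.2 :=
      m1.resolve_left (rot_ne _ (by omega) (by omega) d.1)
    have hd1 : rotBy (2*n) (n/2 + n/2) d.2 = d.1 := by
      rw [← hm1, rotBy_rotBy]
      have hsum : n/2 + n/2 + (n/2 + n/2) = 2*n := by omega
      rw [hsum]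
      exact rotBy_self _ d.1
    have hb1 : btwn (2*n) d.1 (rotBy (2*n) (n/2) d.1) d.2 := by
      refine ⟨?_, ?_⟩
      · rw [arcd_rotBy, Nat.mod_eq_of_lt hkm]
        exact hk0
      · rw [← hm1, arcd_rotBy, arcd_rotBy, Nat.mod_eq_of_lt hkm,
          Nat.mod_eq_of_lt (by omega : n/2 + n/2 < 2*n)]
        omega
    have hb2 : btwn (2*n) d.2 (rotBy (2*n) (n/2) d.2) d.1 := by
      refine ⟨?_, ?_⟩
      · rw [arcd_rotBy, Nat.mod_eq_of_lt hkm]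
        exact hk0
      · rw [← hd1, arcd_rotBy, arcd_rotBy, Nat.mod_eq_of_lt hkm,
          Nat.mod_eq_of_lt (by omega : n/2 + n/2 < 2*n)]
        omega
    have hcross : Crosses (2*n) d (qrot n q d) := by
      rcases pair_eq_cases (key d hd).2 with ⟨c1, c2⟩ | ⟨c1, c2⟩
      · refine Or.inl ⟨?_, ?_⟩
        · rw [c1]; exact hb1
        · rw [c2]; exact hb2
      · refine Or.inr ⟨?_, ?_⟩
        · rw [c2]; exact hb1
        · rw [c1]; exact hb2
    exact q.noncross d hd _ hfd hcross
  have h4f : ∀ d ∈ q.diags, qrot n q (qrot n q (qrot n q (qrot n q d))) = d := by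
    intro d hd
    have k1 := (key d hd).1
    have k2 := (key _ k1).1
    have k3 := (key _ k2).1
    have k4 := (key _ k3).1
    have e : ({(qrot n q (qrot n q (qrot n q (qrot n q d)))).1,
        (qrot n q (qrot n q (qrot n q (qrot n q d)))).2} : Finset (Fin (2*n)))
        = {d.1, d.2} := by
      rw [hU _ k3, hU _ k2, hU _ k1, hU _ hd]
      simp only [Finset.image_insert, Finset.image_singleton]
      rw [hrot4, hrot4]
    obtain ⟨h1, h2⟩ := pair_eq_of_lt (q.ord _ k4) (q.ord d hd) e
    exact Prod.ext_iff.mpr ⟨h1, h2⟩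
  have hdvd := four_dvd (qrot n q) q.diags (fun d hd => (key d hd).1) hfix hfix2 h4f
  rw [q.card_eq] at hdvd
  omega
end
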